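/- Suppose u is uniform with values A > B > C. For every integer m with kmin < m ≤ N, the cut-off profile s with cut-off m has expected utility over the subgame T1 given by EU_{T1}(s) = ((m - 1 - kmin)·A + C + (kmax - m)·B) / (kmax - kmin). (In particular, |T1| = kmax - kmin.) -/

import Mathlib

/-- The two actions: `c` (canteen) and `o` (office). -/
inductive Act : Type
  | c : Act
  | o : Act
deriving DecidableEq

open Act

/-- The set of arrival pairs
`T = {(k, k+1) : kmin ≤ k ≤ kmax - 1} ∪ {(k, k-1) : kmin + 1 ≤ k ≤ kmax}`. -/
noncomputable def T (kmin kmax : ℤ) : Finset (ℤ × ℤ) :=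
  ((Finset.Icc kmin (kmax - 1)).image (fun k => (k, k + 1))) ∪
  ((Finset.Icc (kmin + 1) kmax).image (fun k => (k, k - 1)))

/-- Subgame `T1 = {(t1,t2) ∈ T : t1 ≡ kmin (mod 2)}`. -/
noncomputable def T1 (kmin kmax : ℤ) : Finset (ℤ × ℤ) :=
  (T kmin kmax).filter (fun t => t.1 % 2 = kmin % 2)

/-- Subgame `T2 = {(t1,t2) ∈ T : t2 ≡ kmin (mod 2)}`. -/
noncomputable def T2 (kmin kmax : ℤ) : Finset (ℤ × ℤ) :=
  (T kmin kmax).filter (fun t => t.2 % 2 = kmin % 2)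

/-- The expected utility of profile `s` over a set `S` of arrival pairs:
`EU_S(s) = (1/|S|) · Σ_{(t1,t2) ∈ S} u_{(t1,t2)}(s_1(t1), s_2(t2))`. -/
noncomputable def EU (u : ℤ × ℤ → Act → Act → ℝ) (s : (ℤ → Act) × (ℤ → Act))
    (S : Finset (ℤ × ℤ)) : ℝ :=
  (∑ t ∈ S, u t (s.1 t.1) (s.2 t.2)) / S.card

/-- `s` is Pareto optimal over `S` if no profile `s'` has `EU_S(s') > EU_S(s)`. -/
def ParetoOptimal (u : ℤ × ℤ → Act → Act → ℝ) (S : Finset (ℤ × ℤ))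
    (s : (ℤ → Act) × (ℤ → Act)) : Prop :=
  ¬ ∃ s' : (ℤ → Act) × (ℤ → Act), EU u s' S > EU u s S

/-- `u` satisfies conditions (U1) and (U2) on the arrival pairs of `T`. -/
def SatisfiesU1U2 (kmin kmax N : ℤ) (u : ℤ × ℤ → Act → Act → ℝ) : Prop :=
  ∀ t ∈ T kmin kmax,
    (t.1 < N ∧ t.2 < N →
      u t c c > u t o o ∧ u t o o > u t c o ∧ u t c o = u t o c) ∧
    (N ≤ t.1 ∨ N ≤ t.2 →
      u t o o > u t c o ∧ u t c o = u t o c ∧ u t o c = u t c c)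

/-- `u` is uniform with values `A > B > C` (the order is assumed separately). -/
def Uniform (kmin kmax N : ℤ) (u : ℤ × ℤ → Act → Act → ℝ) (A B C : ℝ) : Prop :=
  ∀ t ∈ T kmin kmax,
    (t.1 < N ∧ t.2 < N →
      u t c c = A ∧ u t o o = B ∧ u t c o = C ∧ u t o c = C) ∧
    (N ≤ t.1 ∨ N ≤ t.2 →
      u t o o = B ∧ u t c c = C ∧ u t c o = C ∧ u t o c = C)

/-- The cut-off strategy with cut-off `m`: canteen iff arriving strictly before `m`. -/
def cutoff (m : ℤ) : ℤ → Act := fun k => if k < m then c else o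

/-- The all-office strategy. -/
def allOffice : ℤ → Act := fun _ => o

/-
The arrival pairs of `T1` are the edges `{j, j + 1}`, `kmin ≤ j < kmax`, each oriented so that
player 1's arrival time has the parity of `kmin`. Under the symmetric cut-off profile with
cut-off `m ≤ N` the utility of an edge depends only on how it sits relative to `m`: both players
go to the canteen before `N` (value `A`) when `j + 1 < m`, they miscoordinate (value `C`) on the
single edge `j = m - 1`, and both go to the office (value `B`) when `m ≤ j`. Summing gives the
numerator.
-/

open Act Finset

def T1Pair (kmin j : ℤ) : ℤ × ℤ := if j % 2 = kmin % 2 then (j, j + 1) else (j + 1, j)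

lemma T1Pair_injective (kmin : ℤ) : Function.Injective (T1Pair kmin) := by
  intro a b h
  unfold T1Pair at h
  split_ifs at h <;> simp only [Prod.ext_iff] at h <;> omega

lemma T1_eq_image_T1Pair (kmin kmax : ℤ) :
    T1 kmin kmax = (Ico kmin kmax).image (T1Pair kmin) := by
  ext t
  simp only [T1, T, T1Pair, mem_filter, mem_union, mem_image, mem_Icc, mem_Ico]
  constructor
  · rintro ⟨⟨k, hk, rfl⟩ | ⟨k, hk, rfl⟩, hpar⟩
    · exact ⟨k, by omega, if_pos hpar⟩
    · refine ⟨k - 1, by omega, ?_⟩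
      rw [if_neg (by omega), sub_add_cancel]
  · rintro ⟨j, hj, rfl⟩
    by_cases h : j % 2 = kmin % 2
    · rw [if_pos h]
      exact ⟨Or.inl ⟨j, by omega, rfl⟩, h⟩
    · rw [if_neg h]
      exact ⟨Or.inr ⟨j + 1, by omega, by simp⟩, by omega⟩

lemma card_T1 {kmin kmax : ℤ} (h : kmin ≤ kmax) : ((T1 kmin kmax).card : ℤ) = kmax - kmin := by
  rw [T1_eq_image_T1Pair, card_image_of_injective _ (T1Pair_injective kmin), Int.card_Ico,
    Int.toNat_of_nonneg (by omega)]

lemma min_T1Pair (kmin j : ℤ) : min (T1Pair kmin j).1 (T1Pair kmin j).2 = j := by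
  unfold T1Pair; split_ifs <;> simp

lemma max_T1Pair (kmin j : ℤ) : max (T1Pair kmin j).1 (T1Pair kmin j).2 = j + 1 := by
  unfold T1Pair; split_ifs <;> simp

lemma Uniform.utility_cutoff {kmin kmax N : ℤ} {u : ℤ × ℤ → Act → Act → ℝ} {A B C : ℝ}
    (hu : Uniform kmin kmax N u A B C) {m : ℤ} (hm : m ≤ N) {t : ℤ × ℤ} (ht : t ∈ T kmin kmax) :
    u t (cutoff m t.1) (cutoff m t.2) =
      if max t.1 t.2 < m then A else if min t.1 t.2 < m then C else B := by
  obtain ⟨hbefore, hafter⟩ := hu t ht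
  simp only [cutoff, max_lt_iff, min_lt_iff]
  by_cases h1 : t.1 < m <;> by_cases h2 : t.2 < m <;> simp only [h1, h2, if_true, if_false,
    and_true, and_false, or_true, or_false]
  · exact (hbefore ⟨by omega, by omega⟩).1
  all_goals
    by_cases hN : t.1 < N ∧ t.2 < N
    · simp only [hbefore hN]
    · simp only [hafter (by omega)]

lemma Int.sum_Ico_const {R : Type*} [Ring R] {a b : ℤ} (h : a ≤ b) (x : R) :
    ∑ _j ∈ Ico a b, x = ((b - a : ℤ) : R) * x := by
  rw [sum_const, Int.card_Ico, nsmul_eq_mul, ← Int.cast_natCast, Int.toNat_of_nonneg (by omega)]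

lemma sum_Ico_cutoff_values {a b m : ℤ} (ha : a < m) (hb : m ≤ b) (A B C : ℝ) :
    ∑ j ∈ Ico a b, (if j + 1 < m then A else if j < m then C else B) =
      ((m - 1 - a : ℤ) : ℝ) * A + C + ((b - m : ℤ) : ℝ) * B := by
  rw [← Ico_union_Ico_eq_Ico (show a ≤ m - 1 by omega) (show m - 1 ≤ b by omega),
    sum_union (Ico_disjoint_Ico_consecutive _ _ _),
    ← Ico_union_Ico_eq_Ico (show m - 1 ≤ m by omega) hb,
    sum_union (Ico_disjoint_Ico_consecutive _ _ _), ← add_assoc]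
  have hA : ∑ j ∈ Ico a (m - 1), (if j + 1 < m then A else if j < m then C else B) =
      ((m - 1 - a : ℤ) : ℝ) * A := by
    rw [← Int.sum_Ico_const (by omega)]
    refine sum_congr rfl fun j hj => ?_
    rw [mem_Ico] at hj
    rw [if_pos (by omega)]
  have hC : ∑ j ∈ Ico (m - 1) m, (if j + 1 < m then A else if j < m then C else B) = C := by
    have hsingleton : Ico (m - 1) m = {m - 1} := by
      ext j
      rw [mem_Ico, mem_singleton]
      omega
    rw [hsingleton, sum_singleton, if_neg (by omega), if_pos (by omega)]
  have hB : ∑ j ∈ Ico m b, (if j + 1 < m then A else if j < m then C else B) =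
      ((b - m : ℤ) : ℝ) * B := by
    rw [← Int.sum_Ico_const hb]
    refine sum_congr rfl fun j hj => ?_
    rw [mem_Ico] at hj
    rw [if_neg (by omega), if_neg (by omega)]
  rw [hA, hC, hB]

theorem stmt_9_general (kmin kmax N : ℤ) (h2 : N ≤ kmax)
    (A B C : ℝ)
    (u : ℤ × ℤ → Act → Act → ℝ) (hu : Uniform kmin kmax N u A B C)
    (m : ℤ) (hm1 : kmin < m) (hm2 : m ≤ N) :
    ((T1 kmin kmax).card : ℤ) = kmax - kmin ∧
    EU u (cutoff m, cutoff m) (T1 kmin kmax) =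
      (((m - 1 - kmin : ℤ) : ℝ) * A + C + ((kmax - m : ℤ) : ℝ) * B) /
        ((kmax - kmin : ℤ) : ℝ) := by
  have hcard := card_T1 (show kmin ≤ kmax by omega)
  refine ⟨hcard, ?_⟩
  have hvalue : ∀ j ∈ Ico kmin kmax,
      u (T1Pair kmin j) (cutoff m (T1Pair kmin j).1) (cutoff m (T1Pair kmin j).2) =
        if j + 1 < m then A else if j < m then C else B := by
    intro j hj
    have hmem : T1Pair kmin j ∈ T1 kmin kmax := by
      rw [T1_eq_image_T1Pair]; exact mem_image_of_mem _ hj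
    rw [hu.utility_cutoff hm2 (mem_filter.1 hmem).1, max_T1Pair, min_T1Pair]
  have hsum : ∑ t ∈ T1 kmin kmax, u t (cutoff m t.1) (cutoff m t.2) =
      ((m - 1 - kmin : ℤ) : ℝ) * A + C + ((kmax - m : ℤ) : ℝ) * B := by
    rw [T1_eq_image_T1Pair, sum_image fun a _ b _ hab => T1Pair_injective kmin hab,
      sum_congr rfl hvalue, sum_Ico_cutoff_values hm1 (hm2.trans h2)]
  rw [EU, hsum, ← hcard, Int.cast_natCast]

/-- Expected utility over `T1` of the cut-off profile with cut-off
`kmin < m ≤ N`, for a uniform utility with values `A > B > C`. In particular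
`|T1| = kmax - kmin`. -/
theorem stmt_9 (kmin kmax N : ℤ) (h1 : kmin < N) (h2 : N ≤ kmax)
    (A B C : ℝ) (hAB : A > B) (hBC : B > C)
    (u : ℤ × ℤ → Act → Act → ℝ) (hu : Uniform kmin kmax N u A B C)
    (m : ℤ) (hm1 : kmin < m) (hm2 : m ≤ N) :
    ((T1 kmin kmax).card : ℤ) = kmax - kmin ∧
    EU u (cutoff m, cutoff m) (T1 kmin kmax) =
      (((m - 1 - kmin : ℤ) : ℝ) * A + C + ((kmax - m : ℤ) : ℝ) * B) /
        ((kmax - kmin : ℤ) : ℝ) :=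
  stmt_9_general kmin kmax N h2 A B C u hu m hm1 hm2
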